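/- arXiv:2307.01897 — 2 statements merged into one kernel-verified Lean document; each statement's English description precedes it below -/
import Mathlib

section
/- There is a bijection ψ from the set of acyclic rotor configurations of the path multigraph P^{x,y}_n onto L_a^n such that g(ρ) = val(ψ(ρ)) for every acyclic rotor configuration ρ. In particular, the number of acyclic rotor configurations of P^{x,y}_n equals F. -/
/-- `F = Σ_{k=0}^n x^(n−k)·y^k`. -/
def Fval (n x y : ℕ) : ℕ := ∑ k ∈ Finset.range (n + 1), x ^ (n - k) * y ^ k

/-- The stable decomposition `v = Σ_{k=0}^n c_k·x^(n−k)·y^k + m·y^(n+1)`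
with digits `c_k ∈ {0,…,y−1}`. -/
def IsStableDecomp (n x y : ℕ) (v : ℤ) (c : Fin (n + 1) → ℕ) (m : ℤ) : Prop :=
  (∀ k : Fin (n + 1), c k < y) ∧
    v = (∑ k : Fin (n + 1), (c k : ℤ) * (x : ℤ) ^ (n - (k : ℕ)) * (y : ℤ) ^ (k : ℕ))
          + m * (y : ℤ) ^ (n + 1)

/-- `L_d^n`: tuples `(c_0,…,c_{n+1})` with `c_{n+1} = 0` matched by
`[0,y−1]*·0·[1,x]*·0`. -/
def Ld (n x y : ℕ) : Set (Fin (n + 2) → ℕ) :=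
  {c | c (Fin.last (n + 1)) = 0 ∧ ∃ k : Fin (n + 1),
    (∀ i : Fin (n + 2), (i : ℕ) < (k : ℕ) → c i < y) ∧
    c k.castSucc = 0 ∧
    (∀ i : Fin (n + 2), (k : ℕ) < (i : ℕ) → (i : ℕ) ≤ n → 1 ≤ c i ∧ c i ≤ x)}

/-- `L_a^n`: tuples `(c_0,…,c_{n+1})` with `c_{n+1} = 0` matched by
`[1,y]*·0·[0,x−1]*·0`. -/
def La (n x y : ℕ) : Set (Fin (n + 2) → ℕ) :=
  {c | c (Fin.last (n + 1)) = 0 ∧ ∃ k : Fin (n + 1),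
    (∀ i : Fin (n + 2), (i : ℕ) < (k : ℕ) → 1 ≤ c i ∧ c i ≤ y) ∧
    c k.castSucc = 0 ∧
    (∀ i : Fin (n + 2), (k : ℕ) < (i : ℕ) → (i : ℕ) ≤ n → c i < x)}

/-- The value `val(c) = Σ_{k=0}^n c_k·x^(n−k)·y^k` of a tuple. -/
def tupleVal (n x y : ℕ) (c : Fin (n + 2) → ℕ) : ℕ :=
  ∑ k : Fin (n + 1), c k.castSucc * x ^ (n - (k : ℕ)) * y ^ (k : ℕ)

/-- `G = {val(c) : c ∈ L_d^n}` viewed as a set of integers. -/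
def Gset (n x y : ℕ) : Set ℤ := {w | ∃ c ∈ Ld n x y, (tupleVal n x y c : ℤ) = w}

/-- Arcmonic value `g_k(j)` of arc number `j` at vertex `u_k`. -/
def gk (n x y k j : ℕ) : ℕ :=
  if j ≤ x then j * x ^ (n - k) * y ^ k else (x + y - j) * x ^ (n - k + 1) * y ^ (k - 1)

/-- Arcmonic value of a rotor configuration `ρ : {1,…,n} → {0,…,x+y−1}`,
encoded with `ρ k` the arc chosen at vertex `u_{k+1}` for `k : Fin n`. -/
def gRotor (n x y : ℕ) (ρ : Fin n → ℕ) : ℕ := ∑ k : Fin n, gk n x y ((k : ℕ) + 1) (ρ k)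

/-- A rotor configuration `ρ : {1,…,n} → {0,…,x+y−1}` (encoded with `ρ k` the
arc chosen at vertex `u_{k+1}` for `k : Fin n`) is acyclic if there is no
`k ∈ {1,…,n−1}` with `ρ(k) ≤ x−1` and `ρ(k+1) ≥ x`. -/
def AcyclicConfig (n x : ℕ) (ρ : Fin n → ℕ) : Prop :=
  ∀ i j : Fin n, (j : ℕ) = (i : ℕ) + 1 → ¬(ρ i < x ∧ x ≤ ρ j)

/-!
In an acyclic configuration the vertices whose arc points left (`ρ(k) ≥ x`) are exactly
`u_1, …, u_a`, where `a` is their number. The configuration is sent to the word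
`(x+y−ρ(1), …, x+y−ρ(a), 0, ρ(a+1), …, ρ(n), 0)`, whose letters before the zero lie in `[1, y]`
and after it in `[0, x−1]`; conversely the position of the zero of a word in `L_a^n` recovers `a`.
With this shift of the right-pointing arcs by one position, the arcmonic value `g_k(ρ(k))` is
exactly the contribution of the letter coming from `u_k` to `val`. For fixed `a` there are
`y^a · x^(n−a)` configurations, and summing over `a` gives `F`.
-/

open Finset

theorem Fin.apply_iff_lt_card_filter_of_antitone {n : ℕ} {p : Fin n → Prop} [DecidablePred p]
    (hp : Antitone p) (k : Fin n) : p k ↔ (k : ℕ) < #{i | p i} := by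
  constructor
  · intro hk
    have hsub : Iic k ⊆ ({i | p i} : Finset (Fin n)) := fun i hi =>
      mem_filter.2 ⟨mem_univ i, hp (mem_Iic.1 hi) hk⟩
    simpa using card_le_card hsub
  · intro hlt
    by_contra hk
    have hsub : ({i | p i} : Finset (Fin n)) ⊆ Iio k := fun i hi =>
      mem_Iio.2 (lt_of_not_ge fun hki => hk (hp hki (mem_filter.1 hi).2))
    have := card_le_card hsub
    rw [Fin.card_Iio] at this
    omega

theorem AcyclicConfig.antitone {n x : ℕ} {ρ : Fin n → ℕ} (h : AcyclicConfig n x ρ) :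
    Antitone fun k => x ≤ ρ k := by
  cases n with
  | zero => exact fun i => i.elim0
  | succ n =>
    refine Fin.antitone_iff_succ_le.2 fun i hsucc => ?_
    by_contra hlt
    exact h i.castSucc i.succ (by simp) ⟨not_le.1 hlt, hsucc⟩

namespace PathRotor

variable {n x y a : ℕ} {ρ : Fin n → ℕ}

def IsSplitAt (x a : ℕ) (ρ : Fin n → ℕ) : Prop := ∀ k : Fin n, x ≤ ρ k ↔ (k : ℕ) < a

def leftArcCount (x : ℕ) (ρ : Fin n → ℕ) : ℕ := #{k | x ≤ ρ k}

theorem leftArcCount_le : leftArcCount x ρ ≤ n :=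
  (card_filter_le _ _).trans (card_fin n).le

theorem _root_.AcyclicConfig.isSplitAt_leftArcCount (h : AcyclicConfig n x ρ) :
    IsSplitAt x (leftArcCount x ρ) ρ :=
  Fin.apply_iff_lt_card_filter_of_antitone h.antitone

theorem IsSplitAt.acyclicConfig (h : IsSplitAt x a ρ) : AcyclicConfig n x ρ := by
  intro i j hij ⟨hi, hj⟩
  have := (h i).not.1 (not_le.2 hi)
  have := (h j).1 hj
  omega

theorem IsSplitAt.leftArcCount_eq (h : IsSplitAt x a ρ) (ha : a ≤ n) : leftArcCount x ρ = a := by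
  rw [leftArcCount, filter_congr fun k _ => h k, Fin.card_filter_val_lt]
  omega

def splitBlock (n x y a : ℕ) : Finset (Fin n → ℕ) :=
  Fintype.piFinset fun k => if (k : ℕ) < a then Ico x (x + y) else range x

theorem mem_splitBlock : ρ ∈ splitBlock n x y a ↔ IsSplitAt x a ρ ∧ ∀ k, ρ k < x + y := by
  have hmem (k : Fin n) : (ρ k ∈ if (k : ℕ) < a then Ico x (x + y) else range x) ↔
      (x ≤ ρ k ↔ (k : ℕ) < a) ∧ ρ k < x + y := by
    split_ifs with hk
    · simp only [hk, mem_Ico, iff_true]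
    · simp only [hk, mem_range, iff_false, not_le]
      omega
  simp only [splitBlock, Fintype.mem_piFinset, hmem, forall_and, IsSplitAt]

theorem card_splitBlock (ha : a ≤ n) : #(splitBlock n x y a) = x ^ (n - a) * y ^ a := by
  rw [splitBlock, Fintype.card_piFinset]
  simp only [apply_ite card, Nat.card_Ico, add_tsub_cancel_left, card_range]
  have hcard := card_filter_add_card_filter_not (s := (univ : Finset (Fin n))) fun k => (k : ℕ) < a
  rw [Fin.card_filter_val_lt, card_univ, Fintype.card_fin] at hcard
  rw [prod_ite, prod_const, prod_const, Fin.card_filter_val_lt, mul_comm]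
  congr 2 <;> omega

def zeroExtend {m : ℕ} (c : Fin m → ℕ) (i : ℕ) : ℕ := if h : i < m then c ⟨i, h⟩ else 0

theorem zeroExtend_of_lt {m i : ℕ} (c : Fin m → ℕ) (h : i < m) : zeroExtend c i = c ⟨i, h⟩ :=
  dif_pos h

@[simp]
theorem zeroExtend_val {m : ℕ} (c : Fin m → ℕ) (i : Fin m) : zeroExtend c i = c i :=
  zeroExtend_of_lt c i.isLt

def splitWord (x y a : ℕ) (ρ : Fin n → ℕ) (i : Fin (n + 2)) : ℕ :=
  if (i : ℕ) < a then x + y - zeroExtend ρ i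
  else if a < i ∧ (i : ℕ) ≤ n then zeroExtend ρ (i - 1) else 0

def unsplitWord (x y a : ℕ) (c : Fin (n + 2) → ℕ) (k : Fin n) : ℕ :=
  if (k : ℕ) < a then x + y - zeroExtend c k else zeroExtend c (k + 1)

theorem splitWord_mem_La (hs : IsSplitAt x a ρ) (ha : a ≤ n) (hb : ∀ k, ρ k < x + y) :
    splitWord x y a ρ ∈ La n x y := by
  refine ⟨?_, ⟨a, by omega⟩, fun i hi => ?_, ?_, fun i hi hin => ?_⟩
  · rw [splitWord, Fin.val_last, if_neg (by omega), if_neg (by omega)]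
  · simp only at hi
    have hin : (i : ℕ) < n := by omega
    have := (hs ⟨i, hin⟩).2 hi
    have := hb ⟨i, hin⟩
    rw [splitWord, if_pos hi, zeroExtend_of_lt ρ hin]
    omega
  · simp [splitWord]
  · simp only at hi
    have hin' : (i : ℕ) ≤ n := hin
    have hin : (i : ℕ) - 1 < n := by omega
    have := (hs ⟨i - 1, hin⟩).not.2 (by simp only; omega)
    rw [splitWord, if_neg (by omega), if_pos ⟨hi, hin'⟩, zeroExtend_of_lt ρ hin]
    omega

theorem unsplitWord_splitWord (hb : ∀ k, ρ k < x + y) :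
    unsplitWord x y a (splitWord x y a ρ) = ρ := by
  funext k
  have hk := k.isLt
  by_cases hka : (k : ℕ) < a
  · rw [unsplitWord, if_pos hka, zeroExtend_of_lt _ (by omega), splitWord]
    simp only [if_pos hka, zeroExtend_val]
    have := hb k
    omega
  · rw [unsplitWord, if_neg hka, zeroExtend_of_lt _ (by omega), splitWord]
    simp only [if_neg (show ¬ (k : ℕ) + 1 < a by omega),
      if_pos (show a < (k : ℕ) + 1 ∧ (k : ℕ) + 1 ≤ n by omega), add_tsub_cancel_right, zeroExtend_val]

theorem splitWord_ne_of_lt {b : ℕ} {σ : Fin n → ℕ} (hσ : ∀ k, σ k < x + y) (hb : b ≤ n)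
    (hab : a < b) : splitWord x y a ρ ≠ splitWord x y b σ := by
  intro h
  have hzero := congrFun h ⟨a, by omega⟩
  have := hσ ⟨a, by omega⟩
  simp only [splitWord, lt_irrefl, if_false, hab, if_true, false_and,
    zeroExtend_of_lt σ (show a < n by omega)] at hzero
  omega

theorem eq_of_splitWord_eq {b : ℕ} {σ : Fin n → ℕ} (hρ : ∀ k, ρ k < x + y) (hσ : ∀ k, σ k < x + y)
    (ha : a ≤ n) (hb : b ≤ n) (h : splitWord x y a ρ = splitWord x y b σ) : a = b ∧ ρ = σ := by
  obtain rfl : a = b := le_antisymm (not_lt.1 fun hba => splitWord_ne_of_lt hρ ha hba h.symm)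
    (not_lt.1 fun hab => splitWord_ne_of_lt hσ hb hab h)
  exact ⟨rfl, by rw [← unsplitWord_splitWord (a := a) hρ, h, unsplitWord_splitWord hσ]⟩

theorem splitWord_unsplitWord {c : Fin (n + 2) → ℕ} (ha : a ≤ n)
    (hle : ∀ i : Fin (n + 2), (i : ℕ) < a → c i ≤ x + y) (hzero : c ⟨a, by omega⟩ = 0)
    (hlast : c (Fin.last (n + 1)) = 0) : splitWord x y a (unsplitWord x y a c) = c := by
  funext i
  have hi := i.isLt
  rcases lt_trichotomy (i : ℕ) a with hia | rfl | hai
  · have := hle i hia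
    rw [splitWord, if_pos hia, zeroExtend_of_lt _ (by omega), unsplitWord, if_pos hia,
      zeroExtend_of_lt c hi, Fin.eta]
    omega
  · rw [splitWord, if_neg (lt_irrefl _), if_neg (by omega), ← hzero]
  · by_cases hin : (i : ℕ) ≤ n
    · rw [splitWord, if_neg (by omega), if_pos ⟨hai, hin⟩, zeroExtend_of_lt _ (by omega),
        unsplitWord, if_neg (by simp only; omega), zeroExtend_of_lt c (by simp only; omega)]
      simp only [Nat.sub_add_cancel (show 1 ≤ (i : ℕ) by omega)]
    · obtain rfl : i = Fin.last (n + 1) := Fin.ext (by simp only [Fin.val_last]; omega)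
      rw [splitWord, if_neg (by omega), if_neg (by omega), hlast]

theorem exists_splitWord_eq_of_mem_La {c : Fin (n + 2) → ℕ} (hc : c ∈ La n x y) :
    ∃ a ≤ n, ∃ σ : Fin n → ℕ, IsSplitAt x a σ ∧ (∀ k, σ k < x + y) ∧ splitWord x y a σ = c := by
  obtain ⟨hlast, ⟨a, ha⟩, hpre, hzero, hsuf⟩ := hc
  simp only [Fin.castSucc_mk] at hpre hzero hsuf
  set σ := unsplitWord x y a c with hσ
  have hleft (k : Fin n) (hk : (k : ℕ) < a) : x ≤ σ k ∧ σ k < x + y := by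
    have := hpre ⟨k, by omega⟩ hk
    rw [hσ, unsplitWord, if_pos hk, zeroExtend_of_lt c (by omega)]
    omega
  have hright (k : Fin n) (hk : ¬ (k : ℕ) < a) : σ k < x := by
    rw [hσ, unsplitWord, if_neg hk, zeroExtend_of_lt c (by omega)]
    exact hsuf ⟨k + 1, by omega⟩ (by simp only; omega) (by simp only; omega)
  have hs : IsSplitAt x a σ := fun k => by
    by_cases hk : (k : ℕ) < a
    · simp only [hk, (hleft k hk).1]
    · simp only [hk, iff_false, not_le, hright k hk]
  have hb (k : Fin n) : σ k < x + y := by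
    by_cases hk : (k : ℕ) < a
    · exact (hleft k hk).2
    · exact (hright k hk).trans_le (Nat.le_add_right x y)
  have hle (i : Fin (n + 2)) (hi : (i : ℕ) < a) : c i ≤ x + y := by
    have := hpre i hi
    omega
  exact ⟨a, by omega, σ, hs, hb, splitWord_unsplitWord (by omega) hle hzero hlast⟩

theorem gk_succ_of_le {k j : ℕ} (hk : k < n) (hj : x ≤ j) :
    gk n x y (k + 1) j = (x + y - j) * x ^ (n - k) * y ^ k := by
  rcases hj.eq_or_lt with rfl | hxj
  · rw [gk, if_pos le_rfl, add_tsub_cancel_left, show n - k = n - (k + 1) + 1 by omega]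
    ring
  · rw [gk, if_neg (not_le.2 hxj), show n - (k + 1) + 1 = n - k by omega, add_tsub_cancel_right]

theorem gRotor_eq_tupleVal_splitWord (hs : IsSplitAt x a ρ) (ha : a ≤ n) :
    gRotor n x y ρ = tupleVal n x y (splitWord x y a ρ) := by
  set A : ℕ → ℕ := fun i =>
    if i < a then (x + y - zeroExtend ρ i) * x ^ (n - i) * y ^ i else 0 with hA
  set B : ℕ → ℕ := fun i =>
    if a < i ∧ i ≤ n then zeroExtend ρ (i - 1) * x ^ (n - i) * y ^ i else 0 with hB
  have hterm (k : ℕ) (hk : k < n) : gk n x y (k + 1) (zeroExtend ρ k) = A k + B (k + 1) := by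
    have hsk := hs ⟨k, hk⟩
    simp only at hsk
    by_cases hka : k < a
    · simp only [hA, hB, if_pos hka, if_neg (show ¬ (a < k + 1 ∧ k + 1 ≤ n) by omega), add_zero,
        zeroExtend_of_lt ρ hk]
      rw [gk_succ_of_le hk (hsk.2 hka)]
    · simp only [hA, hB, if_neg hka, if_pos (show a < k + 1 ∧ k + 1 ≤ n by omega), zero_add,
        add_tsub_cancel_right, zeroExtend_of_lt ρ hk]
      rw [gk, if_pos (by omega)]
  have hword (i : Fin (n + 1)) :
      splitWord x y a ρ i.castSucc * x ^ (n - (i : ℕ)) * y ^ (i : ℕ) = A i + B i := by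
    simp only [splitWord, Fin.val_castSucc, hA, hB]
    split_ifs <;> omega
  calc gRotor n x y ρ = ∑ k ∈ range n, gk n x y (k + 1) (zeroExtend ρ k) := by
        rw [gRotor, ← Fin.sum_univ_eq_sum_range (fun k => gk n x y (k + 1) (zeroExtend ρ k))]
        simp only [zeroExtend_val]
    _ = ∑ k ∈ range n, (A k + B (k + 1)) := sum_congr rfl fun k hk => hterm k (mem_range.1 hk)
    _ = ∑ i ∈ range (n + 1), (A i + B i) := by
        rw [sum_add_distrib, sum_add_distrib, sum_range_succ A, sum_range_succ' B]
        simp [hA, hB, ha]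
    _ = tupleVal n x y (splitWord x y a ρ) := by
        rw [tupleVal, ← Fin.sum_univ_eq_sum_range (fun i => A i + B i)]
        exact sum_congr rfl fun i _ => (hword i).symm

theorem card_acyclicConfig :
    Nat.card {ρ : Fin n → ℕ // (∀ k, ρ k < x + y) ∧ AcyclicConfig n x ρ} = Fval n x y := by
  have hmem (ρ : Fin n → ℕ) : ((∀ k, ρ k < x + y) ∧ AcyclicConfig n x ρ) ↔
      ρ ∈ (range (n + 1)).biUnion (splitBlock n x y) := by
    simp only [mem_biUnion, mem_range, mem_splitBlock]
    constructor
    · rintro ⟨hb, hac⟩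
      exact ⟨_, Nat.lt_succ_of_le leftArcCount_le, hac.isSplitAt_leftArcCount, hb⟩
    · rintro ⟨a, -, hs, hb⟩
      exact ⟨hb, hs.acyclicConfig⟩
  have hdisj : (range (n + 1) : Set ℕ).PairwiseDisjoint (splitBlock n x y) := by
    intro a ha b hb hab
    simp only [coe_range, Set.mem_Iio] at ha hb
    refine disjoint_left.2 fun ρ hρa hρb => hab ?_
    rw [← (mem_splitBlock.1 hρa).1.leftArcCount_eq (by omega),
      (mem_splitBlock.1 hρb).1.leftArcCount_eq (by omega)]
  rw [Nat.card_congr (Equiv.subtypeEquivRight hmem), Nat.card_eq_finsetCard, card_biUnion hdisj,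
    Fval]
  exact sum_congr rfl fun a ha => card_splitBlock (Nat.le_of_lt_succ (mem_range.1 ha))

end PathRotor

open PathRotor in
theorem acyclic_bijection_La_general
    (n x y : ℕ) :
    (∃ ψ : {ρ : Fin n → ℕ // (∀ k : Fin n, ρ k < x + y) ∧ AcyclicConfig n x ρ} →
        ↥(La n x y),
      Function.Bijective ψ ∧
      ∀ ρ, gRotor n x y ρ.val = tupleVal n x y (ψ ρ).val) ∧
    Nat.card {ρ : Fin n → ℕ // (∀ k : Fin n, ρ k < x + y) ∧ AcyclicConfig n x ρ}
      = Fval n x y := by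
  refine ⟨⟨fun ρ => ⟨splitWord x y (leftArcCount x ρ.1) ρ.1,
      splitWord_mem_La ρ.2.2.isSplitAt_leftArcCount leftArcCount_le ρ.2.1⟩,
    ⟨fun ρ σ h => ?_, fun c => ?_⟩,
    fun ρ => gRotor_eq_tupleVal_splitWord ρ.2.2.isSplitAt_leftArcCount leftArcCount_le⟩,
    card_acyclicConfig⟩
  · exact Subtype.ext (eq_of_splitWord_eq ρ.2.1 σ.2.1 leftArcCount_le leftArcCount_le
      (congrArg Subtype.val h)).2
  · obtain ⟨a, ha, σ, hs, hb, hc⟩ := exists_splitWord_eq_of_mem_La c.2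
    refine ⟨⟨σ, hb, hs.acyclicConfig⟩, Subtype.ext ?_⟩
    simp only [hs.leftArcCount_eq ha, hc]

/-- There is a bijection `ψ` from the set of acyclic rotor
configurations of `P^{x,y}_n` onto `L_a^n` such that `g(ρ) = val(ψ(ρ))` for
every acyclic rotor configuration `ρ`. In particular the number of acyclic
rotor configurations equals `F`. -/
theorem acyclic_bijection_La
    (n x y : ℕ) (hn : 1 ≤ n) (hx : 0 < x) (hxy : x < y) (hcop : Nat.Coprime x y) :
    (∃ ψ : {ρ : Fin n → ℕ // (∀ k : Fin n, ρ k < x + y) ∧ AcyclicConfig n x ρ} →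
        ↥(La n x y),
      Function.Bijective ψ ∧
      ∀ ρ, gRotor n x y ρ.val = tupleVal n x y (ψ ρ).val) ∧
    Nat.card {ρ : Fin n → ℕ // (∀ k : Fin n, ρ k < x + y) ∧ AcyclicConfig n x ρ}
      = Fval n x y :=
  acyclic_bijection_La_general n x y
end

section
/- Let G be a stopping rotor graph and let ρ, ρ' be rotor configurations of G. Then ρ ∼ ρ' if and only if ρ' can be obtained from ρ by a finite sequence of positive and negative cycle pushes. -/
/-- A (stopping) rotor graph: a finite directed multigraph together with a
rotor order `rotor : A → A` acting on each out-arc fiber `A⁺(u)` as a single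
cycle, such that from every vertex there is a directed path to a sink. -/
structure RotorGraph where
  V : Type
  A : Type
  [instFintypeV : Fintype V]
  [instFintypeA : Fintype A]
  [instDecEqV : DecidableEq V]
  [instDecEqA : DecidableEq A]
  head : A → V
  tail : A → V
  rotor : A → A
  rotor_tail : ∀ a, tail (rotor a) = tail a
  rotor_cycle : ∀ a b : A, tail a = tail b → ∃ k : ℕ, rotor^[k] a = b
  stopping : ∀ v : V, ∃ (m : ℕ) (p : ℕ → V), p 0 = v ∧ (¬∃ a, tail a = p m) ∧
    ∀ i < m, ∃ a, tail a = p i ∧ head a = p (i + 1)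

attribute [instance] RotorGraph.instFintypeV RotorGraph.instFintypeA
  RotorGraph.instDecEqV RotorGraph.instDecEqA

namespace RotorGraph

variable (G : RotorGraph)

/-- The set `V₀` of non-sink vertices (positive outdegree). -/
def V0 : Set G.V := {v | ∃ a, G.tail a = v}

/-- A rotor configuration: a choice `ρ(u) ∈ A⁺(u)` for every `u ∈ V₀`. -/
def RotorConfig := {ρ : ↥G.V0 → G.A // ∀ v : ↥G.V0, G.tail (ρ v) = v.val}

/-- The routing step `routing⁺_u`: move a particle from `u` along `ρ(u)` and
turn the rotor at `u`. -/
def RoutingStep (p q : G.RotorConfig × (G.V → ℤ)) : Prop :=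
  ∃ u : ↥G.V0,
    (∀ w : ↥G.V0, q.1.val w = if w = u then G.rotor (p.1.val u) else p.1.val w) ∧
    (∀ v : G.V, q.2 v =
      p.2 v - (if v = u.val then 1 else 0) + (if v = G.head (p.1.val u) then 1 else 0))

/-- Equivalence of rotor-particle configurations: a finite sequence of
operators `routing⁺_u` and `routing⁻_u`. -/
def RPEquiv : (G.RotorConfig × (G.V → ℤ)) → (G.RotorConfig × (G.V → ℤ)) → Prop :=
  Relation.ReflTransGen (fun p q => G.RoutingStep p q ∨ G.RoutingStep q p)

/-- Equivalence of rotor configurations: `ρ ∼ ρ'` iff `(ρ,σ) ∼ (ρ',σ)` for some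
(equivalently, every) particle configuration `σ`. -/
def RotorEquiv (ρ ρ' : G.RotorConfig) : Prop :=
  ∃ σ : G.V → ℤ, G.RPEquiv (ρ, σ) (ρ', σ)

/-- `C` is (the vertex set of) a directed circuit of the functional graph
`G(ρ)`. -/
def IsCircuit (ρ : G.RotorConfig) (C : Set ↥G.V0) : Prop :=
  ∃ m : ℕ, 0 < m ∧ ∃ f : ZMod m → ↥G.V0, Function.Injective f ∧ Set.range f = C ∧
    ∀ i : ZMod m, G.head (ρ.val (f i)) = (f (i + 1)).val

/-- Positive cycle push: turn the rotor at every vertex of a directed circuit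
of `G(ρ)`.  (A negative cycle push from `ρ` to `ρ'` is exactly a positive cycle
push from `ρ'` to `ρ`.) -/
def PosCyclePush (ρ ρ' : G.RotorConfig) : Prop :=
  ∃ C : Set ↥G.V0, G.IsCircuit ρ C ∧
    (∀ u ∈ C, ρ'.val u = G.rotor (ρ.val u)) ∧ (∀ u ∉ C, ρ'.val u = ρ.val u)

/-- A finite sequence of positive and negative cycle pushes. -/
def CyclePushSeq : G.RotorConfig → G.RotorConfig → Prop :=
  Relation.ReflTransGen (fun a b => G.PosCyclePush a b ∨ G.PosCyclePush b a)

/-- `routing^∞(ρ,σ)`: all rotor-particle configurations equivalent to `(ρ,σ)`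
with no particles left on `V₀`. -/
def RoutingInfty (p : G.RotorConfig × (G.V → ℤ)) : Set (G.RotorConfig × (G.V → ℤ)) :=
  {q | G.RPEquiv p q ∧ ∀ u : ↥G.V0, q.2 u.val = 0}

end RotorGraph

/-!
Routing `n u` times at every `u` (backwards when `n u < 0`) defines an action `route` of `ℤ^{V₀}`
on rotor-particle configurations, generated by the single routings; hence `(ρ, σ) ∼ (ρ', σ)`
exactly when `ρ' = θ^n ρ` for some `n` with zero total displacement.
For such an `n` with a positive entry, the vertices `{n > 0}` are closed under the arcs of `G(ρ)`,
so `G(ρ)` has a circuit there; pushing it has zero displacement and lowers `∑ |n u|`.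
If `n ≤ 0`, the same argument run from `θ^n ρ` with `-n` gives a negative push.
-/

lemma Function.exists_cycle {α : Type*} [Finite α] [Nonempty α] (g : α → α) :
    ∃ m, 0 < m ∧ ∃ f : ZMod m → α, Function.Injective f ∧ ∀ i, f (i + 1) = g (f i) := by
  obtain ⟨i, j, hij, hgij⟩ := Finite.exists_ne_map_eq_of_infinite fun k : ℕ =>
    g^[k] (Classical.arbitrary α)
  wlog hlt : i < j generalizing i j
  · exact this j i hij.symm hgij.symm (by omega)
  set x := g^[i] (Classical.arbitrary α)
  have hx : x ∈ Function.periodicPts g := Function.mk_mem_periodicPts (n := j - i) (by omega) <| by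
    rw [Function.IsPeriodicPt, Function.IsFixedPt, ← Function.iterate_add_apply,
      Nat.sub_add_cancel hlt.le, hgij]
  have hm := Function.minimalPeriod_pos_of_mem_periodicPts hx
  have : NeZero (Function.minimalPeriod g x) := ⟨hm.ne'⟩
  refine ⟨_, hm, fun k => g^[k.val] x, fun k l hkl => ZMod.val_injective _ ?_, fun k => ?_⟩
  · exact (Function.iterate_eq_iterate_iff_of_lt_minimalPeriod (ZMod.val_lt k)
      (ZMod.val_lt l)).1 hkl
  · dsimp only
    rw [ZMod.val_add, ZMod.val_one_eq_one_mod, Nat.add_mod_mod,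
      Function.iterate_mod_minimalPeriod_eq, Function.iterate_succ_apply']

lemma sum_natAbs_sub_indicator_lt {ι : Type*} [Fintype ι] {n : ι → ℤ} {C : Set ι}
    (hC : ∀ u ∈ C, 0 < n u) (hne : C.Nonempty) :
    ∑ u, (n u - C.indicator 1 u).natAbs < ∑ u, (n u).natAbs := by
  obtain ⟨u, hu⟩ := hne
  refine Finset.sum_lt_sum (fun w _ => ?_) ⟨u, Finset.mem_univ _, ?_⟩
  · by_cases hw : w ∈ C
    · simp only [Set.indicator_of_mem hw, Pi.one_apply]
      have := hC w hw
      omega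
    · simp [hw]
  · simp only [Set.indicator_of_mem hu, Pi.one_apply]
    have := hC u hu
    omega

lemma sum_natAbs_add_indicator_lt {ι : Type*} [Fintype ι] {n : ι → ℤ} {C : Set ι}
    (hC : ∀ u ∈ C, n u < 0) (hne : C.Nonempty) :
    ∑ u, (n u + C.indicator 1 u).natAbs < ∑ u, (n u).natAbs := by
  convert sum_natAbs_sub_indicator_lt (n := -n) (fun u hu => neg_pos.2 (hC u hu)) hne using 2 with u
  · rw [← Int.natAbs_neg, Pi.neg_apply, neg_add, sub_eq_add_neg]
  · simp

namespace RotorGraph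

variable (G : RotorGraph)

lemma rotor_bijective : Function.Bijective G.rotor :=
  Function.Surjective.bijective_of_finite fun a => by
    obtain ⟨k, hk⟩ := G.rotor_cycle (G.rotor a) a (G.rotor_tail a)
    exact ⟨G.rotor^[k] a,
      (Function.iterate_succ_apply' _ _ _).symm.trans ((Function.iterate_succ_apply _ _ _).trans hk)⟩

noncomputable instance instFintypeV0 : Fintype ↥G.V0 := Fintype.ofFinite _

noncomputable def rotorPerm : Equiv.Perm G.A := Equiv.ofBijective G.rotor G.rotor_bijective

@[simp] lemma rotorPerm_apply (a : G.A) : G.rotorPerm a = G.rotor a := rfl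

@[simp] lemma tail_rotorPerm_zpow (m : ℤ) (a : G.A) :
    G.tail ((G.rotorPerm ^ m) a) = G.tail a := by
  induction m using Int.induction_on with
  | zero => rfl
  | succ k ih => rw [add_comm, zpow_one_add, Equiv.Perm.mul_apply, rotorPerm_apply, rotor_tail, ih]
  | pred k ih =>
    have h : (G.rotorPerm ^ (-(k : ℤ))) a = G.rotor ((G.rotorPerm ^ (-(k : ℤ) - 1)) a) := by
      rw [← rotorPerm_apply, ← Equiv.Perm.mul_apply, ← zpow_one_add, add_sub_cancel]
    rw [← ih, h, rotor_tail]

lemma rotorConfig_ext_iff {ρ ρ' : G.RotorConfig} : ρ = ρ' ↔ ∀ u, ρ.val u = ρ'.val u :=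
  Subtype.ext_iff.trans funext_iff

noncomputable def turn (n : ↥G.V0 → ℤ) (ρ : G.RotorConfig) : G.RotorConfig :=
  ⟨fun u => (G.rotorPerm ^ n u) (ρ.val u), fun u => by rw [tail_rotorPerm_zpow, ρ.prop]⟩

@[simp] lemma turn_val (n : ↥G.V0 → ℤ) (ρ : G.RotorConfig) (u : ↥G.V0) :
    (G.turn n ρ).val u = (G.rotorPerm ^ n u) (ρ.val u) := rfl

@[simp] lemma turn_zero (ρ : G.RotorConfig) : G.turn 0 ρ = ρ :=
  Subtype.ext <| funext fun _ => rfl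

lemma turn_add (n n' : ↥G.V0 → ℤ) (ρ : G.RotorConfig) :
    G.turn (n + n') ρ = G.turn n' (G.turn n ρ) :=
  Subtype.ext <| funext fun u => by simp only [turn_val, Pi.add_apply, add_comm (n u), zpow_add,
    Equiv.Perm.mul_apply]

def step (a : G.A) : G.V → ℤ := Pi.single (G.head a) 1 - Pi.single (G.tail a) 1

/-- The change of the particle configuration when the rotor at `tail a`, starting at `a`,
routes `m` particles (`routing⁺` `m` times, or `routing⁻` `-m` times if `m < 0`). -/
noncomputable def arcDisplacement (a : G.A) (m : ℤ) : G.V → ℤ :=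
  ∑ k ∈ Finset.Ico 0 m, G.step ((G.rotorPerm ^ k) a) -
    ∑ k ∈ Finset.Ico m 0, G.step ((G.rotorPerm ^ k) a)

@[simp] lemma arcDisplacement_zero (a : G.A) : G.arcDisplacement a 0 = 0 := by
  simp [arcDisplacement]

lemma arcDisplacement_add_one (a : G.A) (m : ℤ) :
    G.arcDisplacement a (m + 1) = G.arcDisplacement a m + G.step ((G.rotorPerm ^ m) a) := by
  rcases le_or_gt 0 m with hm | hm
  · simp only [arcDisplacement, Finset.Ico_eq_empty_of_le hm,
      Finset.Ico_eq_empty_of_le (show (0 : ℤ) ≤ m + 1 by omega), Finset.sum_empty, sub_zero,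
      ← Finset.sum_Ico_add_eq_sum_Ico_add_one hm]
  · rw [arcDisplacement, arcDisplacement, ← Finset.insert_Ico_add_one_left_eq_Ico hm,
      Finset.sum_insert (by simp), Finset.Ico_eq_empty_of_le (show m + 1 ≤ 0 by omega),
      Finset.Ico_eq_empty_of_le hm.le]
    abel

lemma arcDisplacement_sub_one (a : G.A) (m : ℤ) :
    G.arcDisplacement a (m - 1) = G.arcDisplacement a m - G.step ((G.rotorPerm ^ (m - 1)) a) := by
  rw [eq_sub_iff_add_eq, ← arcDisplacement_add_one, sub_add_cancel]

lemma arcDisplacement_one (a : G.A) : G.arcDisplacement a 1 = G.step a := by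
  simpa using G.arcDisplacement_add_one a 0

lemma arcDisplacement_add (a : G.A) (j m : ℤ) :
    G.arcDisplacement a (j + m) =
      G.arcDisplacement a j + G.arcDisplacement ((G.rotorPerm ^ j) a) m := by
  induction m using Int.induction_on with
  | zero => simp
  | succ k ih =>
    rw [← add_assoc, arcDisplacement_add_one, ih, arcDisplacement_add_one, add_assoc,
      ← Equiv.Perm.mul_apply, ← zpow_add, add_comm (k : ℤ) j]
  | pred k ih =>
    rw [← add_sub_assoc, arcDisplacement_sub_one, ih, arcDisplacement_sub_one, add_sub_assoc,
      ← Equiv.Perm.mul_apply, ← zpow_add, show -(k : ℤ) - 1 + j = j + -k - 1 by ring]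

noncomputable def displacement (ρ : G.RotorConfig) (n : ↥G.V0 → ℤ) : G.V → ℤ :=
  ∑ u, G.arcDisplacement (ρ.val u) (n u)

@[simp] lemma displacement_zero (ρ : G.RotorConfig) : G.displacement ρ 0 = 0 := by
  simp [displacement]

lemma displacement_add (ρ : G.RotorConfig) (n n' : ↥G.V0 → ℤ) :
    G.displacement ρ (n + n') = G.displacement ρ n + G.displacement (G.turn n ρ) n' := by
  simp only [displacement, Pi.add_apply, arcDisplacement_add, Finset.sum_add_distrib, turn_val]

lemma displacement_single (ρ : G.RotorConfig) (u : ↥G.V0) (k : ℤ) :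
    G.displacement ρ (Pi.single u k) = G.arcDisplacement (ρ.val u) k :=
  (Finset.sum_eq_single u (fun w _ hw => by simp [hw]) (by simp)).trans (by simp)

noncomputable def route (n : ↥G.V0 → ℤ) (p : G.RotorConfig × (G.V → ℤ)) :
    G.RotorConfig × (G.V → ℤ) :=
  (G.turn n p.1, p.2 + G.displacement p.1 n)

@[simp] lemma route_zero (p : G.RotorConfig × (G.V → ℤ)) : G.route 0 p = p := by
  simp [route]

lemma route_add (n n' : ↥G.V0 → ℤ) (p : G.RotorConfig × (G.V → ℤ)) :
    G.route (n + n') p = G.route n' (G.route n p) := by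
  simp only [route, turn_add, displacement_add, add_assoc]

lemma route_neg_route (n : ↥G.V0 → ℤ) (p : G.RotorConfig × (G.V → ℤ)) :
    G.route (-n) (G.route n p) = p := by
  rw [← route_add, add_neg_cancel, route_zero]

lemma routingStep_iff {p q : G.RotorConfig × (G.V → ℤ)} :
    G.RoutingStep p q ↔ ∃ u, q = G.route (Pi.single u 1) p := by
  refine exists_congr fun u => ?_
  rw [Prod.ext_iff, rotorConfig_ext_iff, funext_iff]
  refine and_congr (forall_congr' fun w => ?_) (forall_congr' fun v => ?_)
  · by_cases hw : w = u
    · subst hw; simp [route]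
    · simp [route, hw]
  · simp only [route, displacement_single, arcDisplacement_one, step, Pi.add_apply,
      Pi.sub_apply, Pi.single_apply, p.1.prop u]
    constructor <;> intro h <;> rw [h] <;> ring

lemma rpEquiv_symm {p q : G.RotorConfig × (G.V → ℤ)} (h : G.RPEquiv p q) : G.RPEquiv q p := by
  induction h with
  | refl => exact .refl
  | tail _ hstep ih => exact .head hstep.symm ih

lemma rpEquiv_iff_exists_route {p q : G.RotorConfig × (G.V → ℤ)} :
    G.RPEquiv p q ↔ ∃ n, G.route n p = q := by
  constructor
  · intro h
    induction h with
    | refl => exact ⟨0, route_zero _ _⟩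
    | tail _ hstep ih =>
      obtain ⟨n, rfl⟩ := ih
      rcases hstep with hstep | hstep <;> obtain ⟨u, hu⟩ := G.routingStep_iff.1 hstep
      · exact ⟨n + Pi.single u 1, by rw [route_add, hu]⟩
      · exact ⟨n + -Pi.single u 1, by rw [route_add, hu, route_neg_route]⟩
  · rintro ⟨n, rfl⟩
    let H : AddSubgroup (↥G.V0 → ℤ) :=
      { carrier := {n | ∀ p, G.RPEquiv p (G.route n p)}
        zero_mem' := fun p => by rw [route_zero]; exact .refl
        add_mem' := fun ha hb p => by rw [route_add]; exact (ha p).trans (hb _)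
        neg_mem' := fun {n} hn p => by
          have hp : G.route n (G.route (-n) p) = p := by simpa using G.route_neg_route (-n) p
          simpa [hp] using G.rpEquiv_symm (hn (G.route (-n) p)) }
    have hsingle : ∀ u, Pi.single u 1 ∈ H := fun u p =>
      .single (Or.inl (G.routingStep_iff.2 ⟨u, rfl⟩))
    have hn : n ∈ H := by
      rw [← Finset.univ_sum_single n]
      exact H.sum_mem fun u _ => by
        simpa [← Pi.single_smul] using H.zsmul_mem (hsingle u) (n u)
    exact hn p

lemma posCyclePush_iff {ρ ρ' : G.RotorConfig} :
    G.PosCyclePush ρ ρ' ↔ ∃ C, G.IsCircuit ρ C ∧ ρ' = G.turn (C.indicator 1) ρ := by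
  refine exists_congr fun C => and_congr_right fun _ => ?_
  simp only [rotorConfig_ext_iff, turn_val]
  constructor
  · rintro ⟨hC, hnC⟩ u
    by_cases hu : u ∈ C
    · simp [hu, hC u hu]
    · simp [hu, hnC u hu]
  · intro h
    exact ⟨fun u hu => by simp [h u, hu], fun u hu => by simp [h u, hu]⟩

lemma IsCircuit.nonempty {ρ : G.RotorConfig} {C : Set ↥G.V0} (hC : G.IsCircuit ρ C) :
    C.Nonempty := by
  obtain ⟨m, hm, f, -, rfl, -⟩ := hC
  have : NeZero m := ⟨hm.ne'⟩
  exact Set.range_nonempty f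

lemma displacement_indicator_of_isCircuit {ρ : G.RotorConfig} {C : Set ↥G.V0}
    (hC : G.IsCircuit ρ C) : G.displacement ρ (C.indicator 1) = 0 := by
  obtain ⟨m, hm, f, hf, rfl, hhead⟩ := hC
  have : NeZero m := ⟨hm.ne'⟩
  calc G.displacement ρ ((Set.range f).indicator 1)
      = ∑ i, G.step (ρ.val (f i)) :=
        (Fintype.sum_of_injective f hf _ _ (fun u hu => by simp [Set.indicator_of_notMem hu])
          (fun i => by simp [arcDisplacement_one])).symm
    _ = ∑ i, (Pi.single (f (i + 1)).val 1 - Pi.single (f i).val 1) := by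
        simp only [step, hhead, ρ.prop]
    _ = 0 := by
        rw [Finset.sum_sub_distrib, sub_eq_zero]
        exact Equiv.sum_comp (Equiv.addRight 1) (fun i => Pi.single (f i).val 1)

lemma exists_isCircuit_subset (ρ : G.RotorConfig) {S : Set ↥G.V0} (hS : S.Nonempty)
    (hclosed : ∀ u ∈ S, ∃ w ∈ S, (w : G.V) = G.head (ρ.val u)) :
    ∃ C ⊆ S, G.IsCircuit ρ C := by
  choose g hgS hg using hclosed
  have := hS.to_subtype
  obtain ⟨m, hm, f, hf, hcycle⟩ := Function.exists_cycle fun s : S => (⟨g s s.2, hgS s s.2⟩ : S)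
  refine ⟨Set.range fun i => (f i : ↥G.V0), Set.range_subset_iff.2 fun i => (f i).2,
    m, hm, _, Subtype.val_injective.comp hf, rfl, fun i => ?_⟩
  simp only [Function.comp_apply, hcycle, hg]

lemma sum_step (P : Finset G.V) (a : G.A) :
    ∑ v ∈ P, G.step a v = (if G.head a ∈ P then 1 else 0) - (if G.tail a ∈ P then 1 else 0) := by
  simp [step, Finset.sum_sub_distrib]

section Counting

variable {G} {P : Finset G.V} {a : G.A} {m : ℤ}

lemma sum_arcDisplacement_nonpos_of_tail_mem (ha : G.tail a ∈ P) (hm : 0 ≤ m) :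
    ∑ v ∈ P, G.arcDisplacement a m v ≤ 0 := by
  induction m, hm using Int.leInduction with
  | base => simp
  | succ m _ ih =>
    rw [arcDisplacement_add_one]
    simp only [Pi.add_apply, Finset.sum_add_distrib, sum_step, tail_rotorPerm_zpow, if_pos ha]
    split_ifs <;> omega

lemma sum_arcDisplacement_nonpos_of_tail_notMem (ha : G.tail a ∉ P) (hm : m ≤ 0) :
    ∑ v ∈ P, G.arcDisplacement a m v ≤ 0 := by
  induction m, hm using Int.leInductionDown with
  | base => simp
  | pred m _ ih =>
    rw [arcDisplacement_sub_one]
    simp only [Pi.sub_apply, Finset.sum_sub_distrib, sum_step, tail_rotorPerm_zpow, if_neg ha]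
    split_ifs <;> omega

lemma head_mem_of_sum_arcDisplacement_eq_zero (ha : G.tail a ∈ P) (hm : 0 < m)
    (h : ∑ v ∈ P, G.arcDisplacement a m v = 0) : G.head a ∈ P := by
  have hrest := sum_arcDisplacement_nonpos_of_tail_mem (a := (G.rotorPerm ^ (1 : ℤ)) a)
    (by rwa [tail_rotorPerm_zpow]) (show 0 ≤ m - 1 by omega)
  rw [← add_sub_cancel 1 m, arcDisplacement_add, arcDisplacement_one] at h
  simp only [Pi.add_apply, Finset.sum_add_distrib, sum_step, if_pos ha] at h
  by_contra hhead
  rw [if_neg hhead] at h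
  omega

end Counting

/-- Count the particles gained by `P = {n > 0}`: a vertex of `P` only sends particles away from
its own position in `P`, a vertex outside `P` only takes particles back, so every vertex
contributes `≤ 0`. The total is `0`, so every contribution is, and the first particle routed
from `u ∈ P` must land in `P`. -/
lemma exists_pos_head_of_displacement_eq_zero {ρ : G.RotorConfig} {n : ↥G.V0 → ℤ}
    (hΦ : G.displacement ρ n = 0) {u : ↥G.V0} (hu : 0 < n u) :
    ∃ w, 0 < n w ∧ (w : G.V) = G.head (ρ.val u) := by
  classical
  set P : Finset G.V := (Finset.univ.filter fun w => 0 < n w).map (Function.Embedding.subtype _)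
  have hP : ∀ w : ↥G.V0, (w : G.V) ∈ P ↔ 0 < n w := by simp [P]
  have hle : ∀ w, ∑ v ∈ P, G.arcDisplacement (ρ.val w) (n w) v ≤ 0 := fun w => by
    rcases lt_or_ge 0 (n w) with hw | hw
    · exact sum_arcDisplacement_nonpos_of_tail_mem (by rwa [ρ.prop, hP]) hw.le
    · exact sum_arcDisplacement_nonpos_of_tail_notMem (by rw [ρ.prop, hP]; omega) hw
  have hsum : ∑ w, ∑ v ∈ P, G.arcDisplacement (ρ.val w) (n w) v = 0 := by
    rw [Finset.sum_comm]
    simpa [displacement, Finset.sum_apply] using congrArg (fun σ => ∑ v ∈ P, σ v) hΦ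
  have hhead := head_mem_of_sum_arcDisplacement_eq_zero (by rwa [ρ.prop, hP]) hu
    ((Finset.sum_eq_zero_iff_of_nonpos fun w _ => hle w).1 hsum u (Finset.mem_univ u))
  simpa [P, eq_comm] using hhead

lemma exists_isCircuit_of_displacement_eq_zero {ρ : G.RotorConfig} {n : ↥G.V0 → ℤ}
    (hΦ : G.displacement ρ n = 0) (hpos : ∃ u, 0 < n u) :
    ∃ C ⊆ {w | 0 < n w}, G.IsCircuit ρ C :=
  G.exists_isCircuit_subset ρ hpos fun _ hu => G.exists_pos_head_of_displacement_eq_zero hΦ hu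

theorem cyclePushSeq_turn_of_displacement_eq_zero (ρ : G.RotorConfig) (n : ↥G.V0 → ℤ)
    (hΦ : G.displacement ρ n = 0) : G.CyclePushSeq ρ (G.turn n ρ) := by
  by_cases hpos : ∃ u, 0 < n u
  · obtain ⟨C, hCn, hC⟩ := G.exists_isCircuit_of_displacement_eq_zero hΦ hpos
    have hΦ' : G.displacement (G.turn (C.indicator 1) ρ) (n - C.indicator 1) = 0 := by
      have h := G.displacement_add ρ (C.indicator 1) (n - C.indicator 1)
      rwa [add_sub_cancel, hΦ, G.displacement_indicator_of_isCircuit hC, zero_add, eq_comm] at h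
    have hlt := sum_natAbs_sub_indicator_lt (fun _ hu => hCn hu) hC.nonempty
    rw [← add_sub_cancel (C.indicator 1) n, turn_add]
    exact .head (Or.inl (G.posCyclePush_iff.2 ⟨C, hC, rfl⟩))
      (cyclePushSeq_turn_of_displacement_eq_zero _ _ hΦ')
  by_cases hneg : ∃ u, n u < 0
  · have hΦ' : G.displacement (G.turn n ρ) (-n) = 0 := by
      simpa [route, hΦ] using congrArg Prod.snd (G.route_neg_route n (ρ, 0))
    obtain ⟨C, hCn, hC⟩ := G.exists_isCircuit_of_displacement_eq_zero hΦ'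
      (by simpa using hneg)
    have hΦ'' : G.displacement ρ (n + C.indicator 1) = 0 := by
      rw [displacement_add, hΦ, G.displacement_indicator_of_isCircuit hC, add_zero]
    have hlt := sum_natAbs_add_indicator_lt (fun _ hu => neg_pos.1 (hCn hu)) hC.nonempty
    refine .tail (cyclePushSeq_turn_of_displacement_eq_zero ρ (n + C.indicator 1) hΦ'')
      (Or.inr ?_)
    rw [turn_add]
    exact G.posCyclePush_iff.2 ⟨C, hC, rfl⟩
  push Not at hpos hneg
  rw [show n = 0 from funext fun u => le_antisymm (hpos u) (hneg u), turn_zero]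
  exact .refl
termination_by ∑ u, (n u).natAbs
decreasing_by all_goals simpa using hlt

lemma rpEquiv_of_posCyclePush {ρ ρ' : G.RotorConfig} (h : G.PosCyclePush ρ ρ') (σ : G.V → ℤ) :
    G.RPEquiv (ρ, σ) (ρ', σ) := by
  obtain ⟨C, hC, rfl⟩ := G.posCyclePush_iff.1 h
  exact G.rpEquiv_iff_exists_route.2
    ⟨C.indicator 1, by simp [route, G.displacement_indicator_of_isCircuit hC]⟩

end RotorGraph

/-- Let `G` be a stopping rotor graph and `ρ, ρ'` rotor
configurations of `G`. Then `ρ ∼ ρ'` if and only if `ρ'` can be obtained from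
`ρ` by a finite sequence of positive and negative cycle pushes. -/
theorem rotorEquiv_iff_cyclePushSeq (G : RotorGraph) (ρ ρ' : G.RotorConfig) :
    G.RotorEquiv ρ ρ' ↔ G.CyclePushSeq ρ ρ' := by
  constructor
  · rintro ⟨σ, h⟩
    obtain ⟨n, hn⟩ := G.rpEquiv_iff_exists_route.1 h
    simp only [RotorGraph.route, Prod.mk.injEq, add_eq_left] at hn
    rw [← hn.1]
    exact G.cyclePushSeq_turn_of_displacement_eq_zero ρ n hn.2
  · intro h
    refine ⟨0, Relation.ReflTransGen.lift' (fun ρ => (ρ, 0)) (fun _ _ hstep => ?_) ρ ρ' h⟩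
    rcases hstep with hpush | hpush
    · exact G.rpEquiv_of_posCyclePush hpush 0
    · exact G.rpEquiv_symm (G.rpEquiv_of_posCyclePush hpush 0)
end
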